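/- arXiv:2309.00799 — 8 statements merged into one kernel-verified Lean document; each statement's English description precedes it below -/
import Mathlib

section
/- For the pencil of plane curves p(x,y;e0:e1) = e0·C(x,y) + e1·D(x,y), where C(x,y) = (y−μ₁x)(y−μ₂x)(y−μ₃x) + c₅x² + c₆xy + c₇y² + c₈x + c₉y and D(x,y) = d₁x² + d₂xy + d₃y² + d₄x + d₅y + (b₁b₃b₅ − b₂b₄b₆) with coefficients cᵢ, dᵢ the explicit symmetric functions of b₁,…,b₆, μ₁,μ₂,μ₃ given in the paper (Appendix A), the member with [e₀:e₁] = [Δ : b₂b₄b₆], where Δ = b₂b₄b₆ − b₁b₃b₅, factorizes as Δ·(y−μ₁x−b₂)(y−μ₂x−b₆)(y−μ₃x−b₄). -/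
/-- The member of the pencil `e₀·C + e₁·D` with `[e₀:e₁] = [Δ : b₂b₄b₆]`
factorises as `Δ·(y−μ₁x−b₂)(y−μ₂x−b₆)(y−μ₃x−b₄)`. -/
theorem stmt0
    (b1 b2 b3 b4 b5 b6 μ1 μ2 μ3 : ℂ)
    (hμ12 : μ1 ≠ μ2) (hμ13 : μ1 ≠ μ3) (hμ23 : μ2 ≠ μ3)
    (Δ : ℂ) (hΔ : Δ = b2*b4*b6 - b1*b3*b5) (hΔ0 : Δ ≠ 0)
    (d1 d2 d3 d4 d5 c5 c6 c7 c8 c9 : ℂ)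
    (hd1 : d1 = b1*μ1*μ2 - b2*μ2*μ3 + b3*μ1*μ3 - b4*μ1*μ2 + b5*μ2*μ3 - b6*μ1*μ3)
    (hd2 : d2 = -b1*μ1 - b1*μ2 + b2*μ2 + b2*μ3 - b3*μ1 - b3*μ3 + b4*μ1 + b4*μ2
      - b5*μ2 - b5*μ3 + b6*μ1 + b6*μ3)
    (hd3 : d3 = b1 - b2 + b3 - b4 + b5 - b6)
    (hd4 : d4 = b1*b3*μ1 + b1*b5*μ2 - b2*b4*μ2 - b2*b6*μ3 + b3*b5*μ3 - b4*b6*μ1)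
    (hd5 : d5 = -b1*b3 - b1*b5 + b2*b4 + b2*b6 - b3*b5 + b4*b6)
    (hc5 : c5 = (b1*b2*b3*b5*μ2*μ3 - b1*b2*b4*b6*μ1*μ2 + b1*b3*b4*b5*μ1*μ2
      + b1*b3*b5*b6*μ1*μ3 - b2*b3*b4*b6*μ1*μ3 - b2*b4*b5*b6*μ2*μ3)/Δ)
    (hc6 : c6 = -(b1*b2*b3*b5*(μ2+μ3) - b1*b2*b4*b6*(μ1+μ2) + b1*b3*b4*b5*(μ1+μ2)
      + b1*b3*b5*b6*(μ1+μ3) - b2*b3*b4*b6*(μ1+μ3) - b2*b4*b5*b6*(μ2+μ3))/Δ)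
    (hc7 : c7 = (b1*b2*b3*b5 - b1*b2*b4*b6 + b1*b3*b4*b5 + b1*b3*b5*b6
      - b2*b3*b4*b6 - b2*b4*b5*b6)/Δ)
    (hc8 : c8 = (b1*b2*b3*b4*b5*μ2 - b1*b2*b3*b4*b6*μ1 + b1*b2*b3*b5*b6*μ3
      - b1*b2*b4*b5*b6*μ2 + b1*b3*b4*b5*b6*μ1 - b2*b3*b4*b5*b6*μ3)/Δ)
    (hc9 : c9 = -(b1*b2*b3*b4*b5 - b1*b2*b3*b4*b6 + b1*b2*b3*b5*b6
      - b1*b2*b4*b5*b6 + b1*b3*b4*b5*b6 - b2*b3*b4*b5*b6)/Δ) :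
    ∀ x y : ℂ,
      Δ * ((y - μ1*x)*(y - μ2*x)*(y - μ3*x) + c5*x^2 + c6*x*y + c7*y^2 + c8*x + c9*y)
      + (b2*b4*b6) * (d1*x^2 + d2*x*y + d3*y^2 + d4*x + d5*y + (b1*b3*b5 - b2*b4*b6))
      = Δ * ((y - μ1*x - b2) * (y - μ2*x - b6) * (y - μ3*x - b4)) := by
  intro x y
  subst hd1 hd2 hd3 hd4 hd5 hc5 hc6 hc7 hc8 hc9
  field_simp
  subst hΔ
  ring
end

section
/- With the same pencil p(x,y;e0:e1) = e0·C(x,y) + e1·D(x,y) and notation as above, the member with [e₀:e₁] = [Δ : b₁b₃b₅] factorizes as Δ·(y−μ₁x−b₅)(y−μ₂x−b₃)(y−μ₃x−b₁). -/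
/-- The member of the pencil `e₀·C + e₁·D` with `[e₀:e₁] = [Δ : b₁b₃b₅]`
factorises as `Δ·(y−μ₁x−b₅)(y−μ₂x−b₃)(y−μ₃x−b₁)`. -/
theorem stmt1
    (b1 b2 b3 b4 b5 b6 μ1 μ2 μ3 : ℂ)
    (hμ12 : μ1 ≠ μ2) (hμ13 : μ1 ≠ μ3) (hμ23 : μ2 ≠ μ3)
    (Δ : ℂ) (hΔ : Δ = b2*b4*b6 - b1*b3*b5) (hΔ0 : Δ ≠ 0)
    (d1 d2 d3 d4 d5 c5 c6 c7 c8 c9 : ℂ)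
    (hd1 : d1 = b1*μ1*μ2 - b2*μ2*μ3 + b3*μ1*μ3 - b4*μ1*μ2 + b5*μ2*μ3 - b6*μ1*μ3)
    (hd2 : d2 = -b1*μ1 - b1*μ2 + b2*μ2 + b2*μ3 - b3*μ1 - b3*μ3 + b4*μ1 + b4*μ2
      - b5*μ2 - b5*μ3 + b6*μ1 + b6*μ3)
    (hd3 : d3 = b1 - b2 + b3 - b4 + b5 - b6)
    (hd4 : d4 = b1*b3*μ1 + b1*b5*μ2 - b2*b4*μ2 - b2*b6*μ3 + b3*b5*μ3 - b4*b6*μ1)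
    (hd5 : d5 = -b1*b3 - b1*b5 + b2*b4 + b2*b6 - b3*b5 + b4*b6)
    (hc5 : c5 = (b1*b2*b3*b5*μ2*μ3 - b1*b2*b4*b6*μ1*μ2 + b1*b3*b4*b5*μ1*μ2
      + b1*b3*b5*b6*μ1*μ3 - b2*b3*b4*b6*μ1*μ3 - b2*b4*b5*b6*μ2*μ3)/Δ)
    (hc6 : c6 = -(b1*b2*b3*b5*(μ2+μ3) - b1*b2*b4*b6*(μ1+μ2) + b1*b3*b4*b5*(μ1+μ2)
      + b1*b3*b5*b6*(μ1+μ3) - b2*b3*b4*b6*(μ1+μ3) - b2*b4*b5*b6*(μ2+μ3))/Δ)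
    (hc7 : c7 = (b1*b2*b3*b5 - b1*b2*b4*b6 + b1*b3*b4*b5 + b1*b3*b5*b6
      - b2*b3*b4*b6 - b2*b4*b5*b6)/Δ)
    (hc8 : c8 = (b1*b2*b3*b4*b5*μ2 - b1*b2*b3*b4*b6*μ1 + b1*b2*b3*b5*b6*μ3
      - b1*b2*b4*b5*b6*μ2 + b1*b3*b4*b5*b6*μ1 - b2*b3*b4*b5*b6*μ3)/Δ)
    (hc9 : c9 = -(b1*b2*b3*b4*b5 - b1*b2*b3*b4*b6 + b1*b2*b3*b5*b6
      - b1*b2*b4*b5*b6 + b1*b3*b4*b5*b6 - b2*b3*b4*b5*b6)/Δ) :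
    ∀ x y : ℂ,
      Δ * ((y - μ1*x)*(y - μ2*x)*(y - μ3*x) + c5*x^2 + c6*x*y + c7*y^2 + c8*x + c9*y)
      + (b1*b3*b5) * (d1*x^2 + d2*x*y + d3*y^2 + d4*x + d5*y + (b1*b3*b5 - b2*b4*b6))
      = Δ * ((y - μ1*x - b5) * (y - μ2*x - b3) * (y - μ3*x - b1)) := by
  intro x y
  subst hd1 hd2 hd3 hd4 hd5 hc5 hc6 hc7 hc8 hc9
  field_simp
  rw [hΔ] at hΔ0 ⊢
  ring
end

section
/- Let 0 < h < 1 and δ = 3(1−h²)(h²+3). The cubic polynomial p₁(x,y) = y·[(1 + h²/3)x² − (1−h²)y² − 1 − h²/3] is a member of the pencil spanned by N(x,y) = (y − √δ/(6h))·ℓ₃₄(x,y)·ℓ₅₆(x,y) and M(x,y) = ℓ₂₃(x,y)·(y + √δ/(6h))·ℓ₆₁(x,y), where ℓ₂₃ = y + (√δ/(3(1−h²)))x − √δ/(3h(1−h²)), ℓ₃₄ = y − (√δ/(3(1−h²)))x + √δ/(3h(1−h²)), ℓ₅₆ = y + (√δ/(3(1−h²)))x + √δ/(3h(1−h²)), ℓ₆₁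 = y − (√δ/(3(1−h²)))x − √δ/(3h(1−h²)); that is, there exist constants α, β ∈ ℝ, not both zero, with αN + βM = γ·p₁ for some γ ≠ 0. -/
/-- The cubic `p₁ = y·[(1+h²/3)x² − (1−h²)y² − 1 − h²/3]` belongs to the
pencil spanned by the two linearly factorised fibres `N` and `M`. -/
theorem stmt8 (h : ℝ) (hh0 : 0 < h) (hh1 : h < 1)
    (δ : ℝ) (hδ : δ = 3*(1 - h^2)*(h^2 + 3))
    (l23 l34 l56 l61 N M p1 : ℝ → ℝ → ℝ)
    (hl23 : ∀ x y, l23 x y = y + (Real.sqrt δ/(3*(1 - h^2)))*x - Real.sqrt δ/(3*h*(1 - h^2)))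
    (hl34 : ∀ x y, l34 x y = y - (Real.sqrt δ/(3*(1 - h^2)))*x + Real.sqrt δ/(3*h*(1 - h^2)))
    (hl56 : ∀ x y, l56 x y = y + (Real.sqrt δ/(3*(1 - h^2)))*x + Real.sqrt δ/(3*h*(1 - h^2)))
    (hl61 : ∀ x y, l61 x y = y - (Real.sqrt δ/(3*(1 - h^2)))*x - Real.sqrt δ/(3*h*(1 - h^2)))
    (hN : ∀ x y, N x y = (y - Real.sqrt δ/(6*h)) * l34 x y * l56 x y)
    (hM : ∀ x y, M x y = l23 x y * (y + Real.sqrt δ/(6*h)) * l61 x y)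
    (hp1 : ∀ x y, p1 x y = y * ((1 + h^2/3)*x^2 - (1 - h^2)*y^2 - 1 - h^2/3)) :
    ∃ α β : ℝ, (α, β) ≠ (0, 0) ∧ ∃ γ : ℝ, γ ≠ 0 ∧
      ∀ x y : ℝ, α * N x y + β * M x y = γ * p1 x y := by
  have h1 : (0:ℝ) < 1 - h^2 := by nlinarith
  have hne : (1:ℝ) - h^2 ≠ 0 := ne_of_gt h1
  have hne0 : h ≠ 0 := ne_of_gt hh0
  have hδ0 : (0:ℝ) ≤ δ := by nlinarith
  have hs : Real.sqrt δ ^ 2 = δ := Real.sq_sqrt hδ0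
  refine ⟨1, 1, by simp, -2/(1 - h^2), by positivity, fun x y => ?_⟩
  rw [hN, hM, hp1, hl23, hl34, hl56, hl61]
  set s := Real.sqrt δ
  rw [hδ] at hs
  linear_combination (norm := (field_simp; ring)) (2*y*(1 - x^2)/(9*(1 - h^2)^2)) * hs
end

section
/- For the quadratic Hamiltonian H(x,y) = (a/2)x² + bxy + (c/2)y² + dx + ey with gauge G = x, the Kahan discretisation (x'−x)/h = (bx + (c/2)y + e/2)x' + (c/2)xy' + (e/2)x, (y'−y)/h = −(ax + (b/2)y + d/2)x' − (b/2)xy' − (d/2)x preserves the rational function H̃ = (H + Δ₂h²x²/8)/(1 + Δ₁h²x²/4), where Δ₁ = ac − b² and Δ₂ = −ae² + 2bde − cd²; i.e., H̃(x',y') = H̃(x,y) whenever the implicit equations hold and denominators don't vanish. -/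
/-- The Kahan discretisation of the gauge-Hamiltonian system
`ẋ = x(bx+cy+e), ẏ = −x(ax+by+d)` preserves
`H̃ = (H + Δ₂h²x²/8)/(1 + Δ₁h²x²/4)`. -/
theorem stmt9 (a b c d e h : ℂ) (hh : h ≠ 0)
    (Δ1 Δ2 : ℂ) (hΔ1 : Δ1 = a*c - b^2) (hΔ2 : Δ2 = -(a*e^2) + 2*b*d*e - c*d^2)
    (H : ℂ → ℂ → ℂ)
    (hH : ∀ x y, H x y = (a/2)*x^2 + b*x*y + (c/2)*y^2 + d*x + e*y)
    (x y x' y' : ℂ)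
    (heq1 : (x' - x)/h = (b*x + (c/2)*y + e/2)*x' + (c/2)*x*y' + (e/2)*x)
    (heq2 : (y' - y)/h = -((a*x + (b/2)*y + d/2)*x') - (b/2)*x*y' - (d/2)*x)
    (hden : 1 + Δ1*h^2*x^2/4 ≠ 0) (hden' : 1 + Δ1*h^2*x'^2/4 ≠ 0) :
    (H x' y' + Δ2*h^2*x'^2/8) / (1 + Δ1*h^2*x'^2/4)
      = (H x y + Δ2*h^2*x^2/8) / (1 + Δ1*h^2*x^2/4) := by
  rw [div_eq_iff hh] at heq1 heq2
  subst hΔ1 hΔ2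
  rw [div_eq_div_iff hden' hden, hH, hH]
  linear_combination
      (d + b*y'/2 + b*y/2 - b*d*h*x'/4 + b*d*h*x/4 - b^2*h*y*x'/4 + b^2*h*x*y'/4
        + a*x'/2 + a*x/2 + a*e*h*x'/4 - a*e*h*x/4 + a*c*h*y*x'/4 - a*c*h*x*y'/4) * heq1
    + (e + c*y'/2 + c*y/2 - c*d*h*x'/4 + c*d*h*x/4 + b*x'/2 + b*x/2
        + b*e*h*x'/4 - b*e*h*x/4) * heq2
end

section
/- Let a,b,c,d,e ∈ ℂ with c ≠ 0, h ≠ 0, Δ₁ = ac − b² ≠ 0, Δ₂ = −ae² + 2bde − cd². The conic pencil member p(x,y) = 2ch²·[(a/2)x² + bxy + (c/2)y² + dx + ey + (Δ₂/8)h²x²] + (e²h² − 4)·[1 + (Δ₁/4)h²x²] factorizes as cΔ₁ times the product of the two affine polynomials ℓ(x,y; −(beh − cdh + 2b)/(2c), −(eh+2)/(ch)) and ℓ(x,y; (beh − cdh − 2b)/(2c), −(eh−2)/(ch)), where ℓ(x,y;μ,β) = y − μx − β, up to a nonzero constant factor. -/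
/-- The conic pencil member with `[e₀:e₁] = [2ch² : e²h² − 4]` factorises
into two affine polynomials, up to a nonzero constant. -/
theorem stmt10 (a b c d e h : ℂ) (hc : c ≠ 0) (hh : h ≠ 0)
    (Δ1 Δ2 : ℂ) (hΔ1 : Δ1 = a*c - b^2) (hΔ10 : Δ1 ≠ 0)
    (hΔ2 : Δ2 = -(a*e^2) + 2*b*d*e - c*d^2)
    (ℓ : ℂ → ℂ → ℂ → ℂ → ℂ) (hℓ : ∀ x y μ β, ℓ x y μ β = y - μ*x - β)
    (p : ℂ → ℂ → ℂ)
    (hp : ∀ x y, p x y = 2*c*h^2 * ((a/2)*x^2 + b*x*y + (c/2)*y^2 + d*x + e*y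
      + (Δ2/8)*h^2*x^2) + (e^2*h^2 - 4) * (1 + (Δ1/4)*h^2*x^2)) :
    ∃ κ : ℂ, κ ≠ 0 ∧ ∀ x y : ℂ,
      p x y = κ * ℓ x y (-((b*e*h - c*d*h + 2*b)/(2*c))) (-((e*h + 2)/(c*h)))
                * ℓ x y ((b*e*h - c*d*h - 2*b)/(2*c)) (-((e*h - 2)/(c*h))) := by
  refine ⟨c^2*h^2, mul_ne_zero (pow_ne_zero 2 hc) (pow_ne_zero 2 hh), fun x y => ?_⟩
  rw [hp, hℓ, hℓ, hΔ1, hΔ2]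
  field_simp
  ring
end

section
/- For the Kahan map (x'−x)/h = xx' − 3yy' − 1, (y'−y)/h = −xy' − x'y (discretising H = y(x²−y²−1)), the rational function H̃(x,y) = [(y − √δ/(6h))·ℓ₃₄·ℓ₅₆]/[ℓ₂₃·(y + √δ/(6h))·ℓ₆₁] with the six affine polynomials ℓᵢⱼ as in the paper (lines through consecutive indeterminacy points) satisfies H̃(x',y') = H̃(x,y) whenever the implicit equations hold and denominators are nonzero, where 0 < h < 1 and δ = 3(1−h²)(3+h²). -/
/-- Invariance of the line-ratio invariant for the Kahan discretisation of
`H = y(x² − y² − 1)`. -/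
theorem stmt16 (h : ℝ) (hh0 : 0 < h) (hh1 : h < 1)
    (δ c : ℝ) (hδ : δ = 3*(1 - h^2)*(3 + h^2)) (hc : c = Real.sqrt δ/(3*(1 - h^2)))
    (l12 l23 l34 l45 l56 l61 : ℝ → ℝ → ℝ)
    (hl12 : ∀ x y, l12 x y = y - Real.sqrt δ/(6*h))
    (hl23 : ∀ x y, l23 x y = y + c*x - c/h)
    (hl34 : ∀ x y, l34 x y = y - c*x + c/h)
    (hl45 : ∀ x y, l45 x y = y + Real.sqrt δ/(6*h))
    (hl56 : ∀ x y, l56 x y = y + c*x + c/h)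
    (hl61 : ∀ x y, l61 x y = y - c*x - c/h)
    (x y x' y' : ℝ)
    (heq1 : (x' - x)/h = x*x' - 3*y*y' - 1)
    (heq2 : (y' - y)/h = -(x*y') - x'*y)
    (hden : l23 x y * l45 x y * l61 x y ≠ 0)
    (hden' : l23 x' y' * l45 x' y' * l61 x' y' ≠ 0) :
    (l12 x' y' * l34 x' y' * l56 x' y') / (l23 x' y' * l45 x' y' * l61 x' y')
      = (l12 x y * l34 x y * l56 x y) / (l23 x y * l45 x y * l61 x y) := by

  have hh : h ≠ 0 := ne_of_gt hh0
  have h1p : (0:ℝ) < 1 - h^2 := by nlinarith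
  have h1 : (1:ℝ) - h^2 ≠ 0 := ne_of_gt h1p
  have hδ0 : 0 ≤ δ := by rw [hδ]; nlinarith
  have hs : (Real.sqrt δ)^2 = 9 - 6*h^2 - 3*h^4 := by
    rw [Real.sq_sqrt hδ0, hδ]; ring
  rw [div_eq_iff hh] at heq1 heq2
  simp only [hl12, hl23, hl34, hl45, hl56, hl61] at hden hden' ⊢
  subst hc
  rw [div_eq_div_iff hden' hden]
  field_simp
  refine mul_left_cancel₀ (pow_ne_zero 4 (mul_ne_zero (three_ne_zero (α := ℝ)) h1)) ?_
  linear_combination ((-78732)*Real.sqrt δ*y*h^2 + (419904)*Real.sqrt δ*y*h^4 + (-874800)*Real.sqrt δ*y*h^6 + (839808)*Real.sqrt δ*y*h^8 + (-262440)*Real.sqrt δ*y*h^10 + (-139968)*Real.sqrt δ*y*h^12 + (104976)*Real.sqrt δ*y*h^14 + (-8748)*Real.sqrt δ*y*h^18 + (-78732)*Real.sqrt δ*x*y*h^3 + (419904)*Real.sqrt δ*x*y*h^5 + (-874800)*Real.sqrt δ*x*y*h^7 + (839808)*Real.sqrt δ*x*y*h^9 + (-262440)*Real.sqrt δ*x*y*h^11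 + (-139968)*Real.sqrt δ*x*y*h^13 + (104976)*Real.sqrt δ*x*y*h^15 + (-8748)*Real.sqrt δ*x*y*h^19 + (78732)*y'*Real.sqrt δ*h^2 + (-419904)*y'*Real.sqrt δ*h^4 + (874800)*y'*Real.sqrt δ*h^6 + (-839808)*y'*Real.sqrt δ*h^8 + (262440)*y'*Real.sqrt δ*h^10 + (139968)*y'*Real.sqrt δ*h^12 + (-104976)*y'*Real.sqrt δ*h^14 + (8748)*y'*Real.sqrt δ*h^18 + (78732)*y'*Real.sqrt δ*y^2*h^4 + (-524880)*y'*Real.sqrt δ*y^2*h^6 + (1469664)*y'*Real.sqrt δ*y^2*h^8 + (-2204496)*y'*Real.sqrt δ*y^2*h^10 + (1837080)*y'*Real.sqrt δ*y^2*h^12 + (-734832)*y'*Real.sqrt δ*y^2*h^14 + (104976)*y'*Real.sqrt δ*y^2*h^18 + (-26244)*y'*Real.sqrt δ*y^2*h^20 + (78732)*y'*Real.sqrt δ*x*h^3 + (-419904)*y'*Real.sqrt δ*x*h^5 + (874800)*y'*Real.sqrt δ*x*h^7 + (-839808)*y'*Real.sqrt δ*x*h^9 + (262440)*y'*Real.sqrt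 δ*x*h^11 + (139968)*y'*Real.sqrt δ*x*h^13 + (-104976)*y'*Real.sqrt δ*x*h^15 + (8748)*y'*Real.sqrt δ*x*h^19 + (-78732)*y'^2*Real.sqrt δ*y*h^4 + (524880)*y'^2*Real.sqrt δ*y*h^6 + (-1469664)*y'^2*Real.sqrt δ*y*h^8 + (2204496)*y'^2*Real.sqrt δ*y*h^10 + (-1837080)*y'^2*Real.sqrt δ*y*h^12 + (734832)*y'^2*Real.sqrt δ*y*h^14 + (-104976)*y'^2*Real.sqrt δ*y*h^18 + (26244)*y'^2*Real.sqrt δ*y*h^20 + (78732)*x'*Real.sqrt δ*y*h^3 + (-419904)*x'*Real.sqrt δ*y*h^5 + (874800)*x'*Real.sqrt δ*y*h^7 + (-839808)*x'*Real.sqrt δ*y*h^9 + (262440)*x'*Real.sqrt δ*y*h^11 + (139968)*x'*Real.sqrt δ*y*h^13 + (-104976)*x'*Real.sqrt δ*y*h^15 + (8748)*x'*Real.sqrt δ*y*h^19 + (78732)*x'*Real.sqrt δ*x*y*h^4 + (-419904)*x'*Real.sqrt δ*x*y*h^6 + (874800)*x'*Real.sqrt δ*x*y*h^8 + (-839808)*x'*Real.sqrt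 δ*x*y*h^10 + (262440)*x'*Real.sqrt δ*x*y*h^12 + (139968)*x'*Real.sqrt δ*x*y*h^14 + (-104976)*x'*Real.sqrt δ*x*y*h^16 + (8748)*x'*Real.sqrt δ*x*y*h^20 + (-78732)*x'*y'*Real.sqrt δ*h^3 + (419904)*x'*y'*Real.sqrt δ*h^5 + (-874800)*x'*y'*Real.sqrt δ*h^7 + (839808)*x'*y'*Real.sqrt δ*h^9 + (-262440)*x'*y'*Real.sqrt δ*h^11 + (-139968)*x'*y'*Real.sqrt δ*h^13 + (104976)*x'*y'*Real.sqrt δ*h^15 + (-8748)*x'*y'*Real.sqrt δ*h^19 + (-78732)*x'*y'*Real.sqrt δ*x*h^4 + (419904)*x'*y'*Real.sqrt δ*x*h^6 + (-874800)*x'*y'*Real.sqrt δ*x*h^8 + (839808)*x'*y'*Real.sqrt δ*x*h^10 + (-262440)*x'*y'*Real.sqrt δ*x*h^12 + (-139968)*x'*y'*Real.sqrt δ*x*h^14 + (104976)*x'*y'*Real.sqrt δ*x*h^16 + (-8748)*x'*y'*Real.sqrt δ*x*h^20) * heq1 + ((78732)*Real.sqrt δ*y^2*h^3 + (-524880)*Real.sqrt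 δ*y^2*h^5 + (1469664)*Real.sqrt δ*y^2*h^7 + (-2204496)*Real.sqrt δ*y^2*h^9 + (1837080)*Real.sqrt δ*y^2*h^11 + (-734832)*Real.sqrt δ*y^2*h^13 + (104976)*Real.sqrt δ*y^2*h^17 + (-26244)*Real.sqrt δ*y^2*h^19 + (78732)*Real.sqrt δ*x*h^2 + (-498636)*Real.sqrt δ*x*h^4 + (1294704)*Real.sqrt δ*x*h^6 + (-1714608)*Real.sqrt δ*x*h^8 + (1102248)*Real.sqrt δ*x*h^10 + (-122472)*Real.sqrt δ*x*h^12 + (-244944)*Real.sqrt δ*x*h^14 + (104976)*Real.sqrt δ*x*h^16 + (8748)*Real.sqrt δ*x*h^18 + (-8748)*Real.sqrt δ*x*h^20 + (-157464)*y'*Real.sqrt δ*y*h^3 + (1049760)*y'*Real.sqrt δ*y*h^5 + (-2939328)*y'*Real.sqrt δ*y*h^7 + (4408992)*y'*Real.sqrt δ*y*h^9 + (-3674160)*y'*Real.sqrt δ*y*h^11 + (1469664)*y'*Real.sqrt δ*y*h^13 + (-209952)*y'*Real.sqrt δ*y*h^17 + (52488)*y'*Real.sqrt δ*y*h^19 +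 (-236196)*y'*Real.sqrt δ*x*y*h^4 + (1259712)*y'*Real.sqrt δ*x*y*h^6 + (-2624400)*y'*Real.sqrt δ*x*y*h^8 + (2519424)*y'*Real.sqrt δ*x*y*h^10 + (-787320)*y'*Real.sqrt δ*x*y*h^12 + (-419904)*y'*Real.sqrt δ*x*y*h^14 + (314928)*y'*Real.sqrt δ*x*y*h^16 + (-26244)*y'*Real.sqrt δ*x*y*h^20 + (78732)*y'^2*Real.sqrt δ*h^3 + (-524880)*y'^2*Real.sqrt δ*h^5 + (1469664)*y'^2*Real.sqrt δ*h^7 + (-2204496)*y'^2*Real.sqrt δ*h^9 + (1837080)*y'^2*Real.sqrt δ*h^11 + (-734832)*y'^2*Real.sqrt δ*h^13 + (104976)*y'^2*Real.sqrt δ*h^17 + (-26244)*y'^2*Real.sqrt δ*h^19 + (-78732)*y'^2*Real.sqrt δ*x*h^4 + (524880)*y'^2*Real.sqrt δ*x*h^6 + (-1469664)*y'^2*Real.sqrt δ*x*h^8 + (2204496)*y'^2*Real.sqrt δ*x*h^10 + (-1837080)*y'^2*Real.sqrt δ*x*h^12 + (734832)*y'^2*Real.sqrt δ*x*h^14 +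 (-104976)*y'^2*Real.sqrt δ*x*h^18 + (26244)*y'^2*Real.sqrt δ*x*h^20 + (-78732)*x'*Real.sqrt δ*h^2 + (498636)*x'*Real.sqrt δ*h^4 + (-1294704)*x'*Real.sqrt δ*h^6 + (1714608)*x'*Real.sqrt δ*h^8 + (-1102248)*x'*Real.sqrt δ*h^10 + (122472)*x'*Real.sqrt δ*h^12 + (244944)*x'*Real.sqrt δ*h^14 + (-104976)*x'*Real.sqrt δ*h^16 + (-8748)*x'*Real.sqrt δ*h^18 + (8748)*x'*Real.sqrt δ*h^20 + (78732)*x'*Real.sqrt δ*y^2*h^4 + (-524880)*x'*Real.sqrt δ*y^2*h^6 + (1469664)*x'*Real.sqrt δ*y^2*h^8 + (-2204496)*x'*Real.sqrt δ*y^2*h^10 + (1837080)*x'*Real.sqrt δ*y^2*h^12 + (-734832)*x'*Real.sqrt δ*y^2*h^14 + (104976)*x'*Real.sqrt δ*y^2*h^18 + (-26244)*x'*Real.sqrt δ*y^2*h^20 + (236196)*x'*y'*Real.sqrt δ*y*h^4 + (-1259712)*x'*y'*Real.sqrt δ*y*h^6 + (2624400)*x'*y'*Real.sqrt δ*y*h^8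 + (-2519424)*x'*y'*Real.sqrt δ*y*h^10 + (787320)*x'*y'*Real.sqrt δ*y*h^12 + (419904)*x'*y'*Real.sqrt δ*y*h^14 + (-314928)*x'*y'*Real.sqrt δ*y*h^16 + (26244)*x'*y'*Real.sqrt δ*y*h^20) * heq2 + ((-8748)*Real.sqrt δ*y*h^3 + (40824)*Real.sqrt δ*y*h^5 + (-72900)*Real.sqrt δ*y*h^7 + (58320)*Real.sqrt δ*y*h^9 + (-14580)*Real.sqrt δ*y*h^11 + (-5832)*Real.sqrt δ*y*h^13 + (2916)*Real.sqrt δ*y*h^15 + (-8748)*Real.sqrt δ*y^3*h^3 + (52488)*Real.sqrt δ*y^3*h^5 + (-131220)*Real.sqrt δ*y^3*h^7 + (174960)*Real.sqrt δ*y^3*h^9 + (-131220)*Real.sqrt δ*y^3*h^11 + (52488)*Real.sqrt δ*y^3*h^13 + (-8748)*Real.sqrt δ*y^3*h^15 + (8748)*Real.sqrt δ*x^2*y*h^3 + (-40824)*Real.sqrt δ*x^2*y*h^5 + (72900)*Real.sqrt δ*x^2*y*h^7 + (-58320)*Real.sqrt δ*x^2*y*h^9 + (14580)*Real.sqrt δ*x^2*y*h^11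 + (5832)*Real.sqrt δ*x^2*y*h^13 + (-2916)*Real.sqrt δ*x^2*y*h^15 + (-972)*Real.sqrt δ^3*y*h^3 + (3888)*Real.sqrt δ^3*y*h^5 + (-5832)*Real.sqrt δ^3*y*h^7 + (3888)*Real.sqrt δ^3*y*h^9 + (-972)*Real.sqrt δ^3*y*h^11 + (972)*Real.sqrt δ^3*x^2*y*h^3 + (-3888)*Real.sqrt δ^3*x^2*y*h^5 + (5832)*Real.sqrt δ^3*x^2*y*h^7 + (-3888)*Real.sqrt δ^3*x^2*y*h^9 + (972)*Real.sqrt δ^3*x^2*y*h^11 + (8748)*y'*Real.sqrt δ*h^3 + (-40824)*y'*Real.sqrt δ*h^5 + (72900)*y'*Real.sqrt δ*h^7 + (-58320)*y'*Real.sqrt δ*h^9 + (14580)*y'*Real.sqrt δ*h^11 + (5832)*y'*Real.sqrt δ*h^13 + (-2916)*y'*Real.sqrt δ*h^15 + (-26244)*y'*Real.sqrt δ*y^2*h^5 + (122472)*y'*Real.sqrt δ*y^2*h^7 + (-218700)*y'*Real.sqrt δ*y^2*h^9 + (174960)*y'*Real.sqrt δ*y^2*h^11 + (-43740)*y'*Real.sqrt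 δ*y^2*h^13 + (-17496)*y'*Real.sqrt δ*y^2*h^15 + (8748)*y'*Real.sqrt δ*y^2*h^17 + (-8748)*y'*Real.sqrt δ*x^2*h^5 + (40824)*y'*Real.sqrt δ*x^2*h^7 + (-72900)*y'*Real.sqrt δ*x^2*h^9 + (58320)*y'*Real.sqrt δ*x^2*h^11 + (-14580)*y'*Real.sqrt δ*x^2*h^13 + (-5832)*y'*Real.sqrt δ*x^2*h^15 + (2916)*y'*Real.sqrt δ*x^2*h^17 + (972)*y'*Real.sqrt δ^3*h^3 + (-3888)*y'*Real.sqrt δ^3*h^5 + (5832)*y'*Real.sqrt δ^3*h^7 + (-3888)*y'*Real.sqrt δ^3*h^9 + (972)*y'*Real.sqrt δ^3*h^11 + (-972)*y'*Real.sqrt δ^3*x^2*h^5 + (3888)*y'*Real.sqrt δ^3*x^2*h^7 + (-5832)*y'*Real.sqrt δ^3*x^2*h^9 + (3888)*y'*Real.sqrt δ^3*x^2*h^11 + (-972)*y'*Real.sqrt δ^3*x^2*h^13 + (26244)*y'^2*Real.sqrt δ*y*h^5 + (-122472)*y'^2*Real.sqrt δ*y*h^7 + (218700)*y'^2*Real.sqrt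 δ*y*h^9 + (-174960)*y'^2*Real.sqrt δ*y*h^11 + (43740)*y'^2*Real.sqrt δ*y*h^13 + (17496)*y'^2*Real.sqrt δ*y*h^15 + (-8748)*y'^2*Real.sqrt δ*y*h^17 + (-26244)*y'^2*Real.sqrt δ*x^2*y*h^5 + (122472)*y'^2*Real.sqrt δ*x^2*y*h^7 + (-218700)*y'^2*Real.sqrt δ*x^2*y*h^9 + (174960)*y'^2*Real.sqrt δ*x^2*y*h^11 + (-43740)*y'^2*Real.sqrt δ*x^2*y*h^13 + (-17496)*y'^2*Real.sqrt δ*x^2*y*h^15 + (8748)*y'^2*Real.sqrt δ*x^2*y*h^17 + (8748)*y'^3*Real.sqrt δ*h^3 + (-52488)*y'^3*Real.sqrt δ*h^5 + (131220)*y'^3*Real.sqrt δ*h^7 + (-174960)*y'^3*Real.sqrt δ*h^9 + (131220)*y'^3*Real.sqrt δ*h^11 + (-52488)*y'^3*Real.sqrt δ*h^13 + (8748)*y'^3*Real.sqrt δ*h^15 + (-8748)*y'^3*Real.sqrt δ*x^2*h^5 + (52488)*y'^3*Real.sqrt δ*x^2*h^7 + (-131220)*y'^3*Real.sqrt δ*x^2*h^9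 + (174960)*y'^3*Real.sqrt δ*x^2*h^11 + (-131220)*y'^3*Real.sqrt δ*x^2*h^13 + (52488)*y'^3*Real.sqrt δ*x^2*h^15 + (-8748)*y'^3*Real.sqrt δ*x^2*h^17 + (8748)*x'^2*Real.sqrt δ*y*h^5 + (-40824)*x'^2*Real.sqrt δ*y*h^7 + (72900)*x'^2*Real.sqrt δ*y*h^9 + (-58320)*x'^2*Real.sqrt δ*y*h^11 + (14580)*x'^2*Real.sqrt δ*y*h^13 + (5832)*x'^2*Real.sqrt δ*y*h^15 + (-2916)*x'^2*Real.sqrt δ*y*h^17 + (8748)*x'^2*Real.sqrt δ*y^3*h^5 + (-52488)*x'^2*Real.sqrt δ*y^3*h^7 + (131220)*x'^2*Real.sqrt δ*y^3*h^9 + (-174960)*x'^2*Real.sqrt δ*y^3*h^11 + (131220)*x'^2*Real.sqrt δ*y^3*h^13 + (-52488)*x'^2*Real.sqrt δ*y^3*h^15 + (8748)*x'^2*Real.sqrt δ*y^3*h^17 + (-8748)*x'^2*Real.sqrt δ*x^2*y*h^5 + (40824)*x'^2*Real.sqrt δ*x^2*y*h^7 + (-72900)*x'^2*Real.sqrt δ*x^2*y*h^9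 + (58320)*x'^2*Real.sqrt δ*x^2*y*h^11 + (-14580)*x'^2*Real.sqrt δ*x^2*y*h^13 + (-5832)*x'^2*Real.sqrt δ*x^2*y*h^15 + (2916)*x'^2*Real.sqrt δ*x^2*y*h^17 + (972)*x'^2*Real.sqrt δ^3*y*h^5 + (-3888)*x'^2*Real.sqrt δ^3*y*h^7 + (5832)*x'^2*Real.sqrt δ^3*y*h^9 + (-3888)*x'^2*Real.sqrt δ^3*y*h^11 + (972)*x'^2*Real.sqrt δ^3*y*h^13 + (-972)*x'^2*Real.sqrt δ^3*x^2*y*h^5 + (3888)*x'^2*Real.sqrt δ^3*x^2*y*h^7 + (-5832)*x'^2*Real.sqrt δ^3*x^2*y*h^9 + (3888)*x'^2*Real.sqrt δ^3*x^2*y*h^11 + (-972)*x'^2*Real.sqrt δ^3*x^2*y*h^13 + (-8748)*x'^2*y'*Real.sqrt δ*h^3 + (40824)*x'^2*y'*Real.sqrt δ*h^5 + (-72900)*x'^2*y'*Real.sqrt δ*h^7 + (58320)*x'^2*y'*Real.sqrt δ*h^9 + (-14580)*x'^2*y'*Real.sqrt δ*h^11 + (-5832)*x'^2*y'*Real.sqrt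 δ*h^13 + (2916)*x'^2*y'*Real.sqrt δ*h^15 + (26244)*x'^2*y'*Real.sqrt δ*y^2*h^5 + (-122472)*x'^2*y'*Real.sqrt δ*y^2*h^7 + (218700)*x'^2*y'*Real.sqrt δ*y^2*h^9 + (-174960)*x'^2*y'*Real.sqrt δ*y^2*h^11 + (43740)*x'^2*y'*Real.sqrt δ*y^2*h^13 + (17496)*x'^2*y'*Real.sqrt δ*y^2*h^15 + (-8748)*x'^2*y'*Real.sqrt δ*y^2*h^17 + (8748)*x'^2*y'*Real.sqrt δ*x^2*h^5 + (-40824)*x'^2*y'*Real.sqrt δ*x^2*h^7 + (72900)*x'^2*y'*Real.sqrt δ*x^2*h^9 + (-58320)*x'^2*y'*Real.sqrt δ*x^2*h^11 + (14580)*x'^2*y'*Real.sqrt δ*x^2*h^13 + (5832)*x'^2*y'*Real.sqrt δ*x^2*h^15 + (-2916)*x'^2*y'*Real.sqrt δ*x^2*h^17 + (-972)*x'^2*y'*Real.sqrt δ^3*h^3 + (3888)*x'^2*y'*Real.sqrt δ^3*h^5 + (-5832)*x'^2*y'*Real.sqrt δ^3*h^7 + (3888)*x'^2*y'*Real.sqrt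 δ^3*h^9 + (-972)*x'^2*y'*Real.sqrt δ^3*h^11 + (972)*x'^2*y'*Real.sqrt δ^3*x^2*h^5 + (-3888)*x'^2*y'*Real.sqrt δ^3*x^2*h^7 + (5832)*x'^2*y'*Real.sqrt δ^3*x^2*h^9 + (-3888)*x'^2*y'*Real.sqrt δ^3*x^2*h^11 + (972)*x'^2*y'*Real.sqrt δ^3*x^2*h^13) * hs
end

section
/- Let 0 < h < 1 and δ = 3(1−h²)(3+h²), c = √δ/(3(1−h²)). Setting H̃(x,y) = (ℓ₁₂·ℓ₃₄·ℓ₅₆)/(ℓ₂₃·ℓ₄₅·ℓ₆₁) with the six affine polynomials ℓᵢⱼ of the non-factorisable example, one has the asymptotic expansion as h → 0⁺: H̃(x,y) = −1 − 4·y(x²−y²−1)·h³ + O(h⁴), for each fixed (x,y) where all denominators are eventually nonzero; in particular lim_{h→0⁺} (H̃(x,y) + 1)/h³ = −4·y(x²−y²−1). -/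
open Filter Topology

lemma key17 (x y a b c : ℝ) (hA : y + c*x - b ≠ 0) (hB : y + a ≠ 0)
    (hC : y - c*x - b ≠ 0) (hrel : b^2 - 2*a*b = c^2) :
    ((y - a)*(y - c*x + b)*(y + c*x + b)) / ((y + c*x - b)*(y + a)*(y - c*x - b)) + 1
      = (2*y*(y^2 - c^2*(x^2-1))) / ((y + c*x - b)*(y + a)*(y - c*x - b)) := by
  field_simp
  linear_combination (2*y) * hrel

set_option maxHeartbeats 1000000 in
/-- Continuum-limit expansion of the line-ratio invariant of the
non-factorisable example: for fixed `(x,y)`,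
`lim_{h→0⁺} (H̃(x,y) + 1)/h³ = −4·y(x²−y²−1)`. -/
theorem stmt17 (x y : ℝ)
    (Htilde : ℝ → ℝ)
    (hHtilde : ∀ h : ℝ, Htilde h =
      (let δ := 3*(1 - h^2)*(3 + h^2);
       let c := Real.sqrt δ/(3*(1 - h^2));
       ((y - Real.sqrt δ/(6*h)) * (y - c*x + c/h) * (y + c*x + c/h)) /
       ((y + c*x - c/h) * (y + Real.sqrt δ/(6*h)) * (y - c*x - c/h)))) :
    Tendsto (fun h : ℝ => (Htilde h + 1)/h^3) (nhdsWithin 0 (Set.Ioi 0))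
      (nhds (-4 * (y * (x^2 - y^2 - 1)))) := by
  set g : ℝ → ℝ := fun h =>
    (2*y*(y^2 - (Real.sqrt (3*(1-h^2)*(3+h^2))/(3*(1-h^2)))^2*(x^2-1))) /
    ((h*(y + (Real.sqrt (3*(1-h^2)*(3+h^2))/(3*(1-h^2)))*x) - Real.sqrt (3*(1-h^2)*(3+h^2))/(3*(1-h^2))) *
     (h*y + Real.sqrt (3*(1-h^2)*(3+h^2))/6) *
     (h*(y - (Real.sqrt (3*(1-h^2)*(3+h^2))/(3*(1-h^2)))*x) - Real.sqrt (3*(1-h^2)*(3+h^2))/(3*(1-h^2)))) with hgdef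
  have h9 : Real.sqrt 9 = 3 := by
    rw [show (9:ℝ) = 3^2 by norm_num, Real.sqrt_sq (by norm_num)]
  have hcont : ContinuousAt g 0 := by
    have hs : Continuous (fun h : ℝ => Real.sqrt (3*(1-h^2)*(3+h^2))) :=
      Real.continuous_sqrt.comp (by continuity)
    have hc : ContinuousAt (fun h : ℝ => Real.sqrt (3*(1-h^2)*(3+h^2))/(3*(1-h^2))) 0 :=
      hs.continuousAt.div (by fun_prop) (by norm_num)
    apply ContinuousAt.div
    · fun_prop
    · exact (((continuousAt_id.mul (continuousAt_const.add (hc.mul continuousAt_const))).sub hc).mul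
        ((continuousAt_id.mul continuousAt_const).add (hs.continuousAt.div_const 6))).mul
        ((continuousAt_id.mul (continuousAt_const.sub (hc.mul continuousAt_const))).sub hc)
    · norm_num [h9]
  have hg0 : g 0 = -4 * (y * (x^2 - y^2 - 1)) := by
    simp only [hgdef]
    norm_num [h9]
    ring
  have hlim : Tendsto g (nhdsWithin 0 (Set.Ioi 0)) (nhds (-4 * (y * (x^2 - y^2 - 1)))) := by
    rw [← hg0]
    exact hcont.tendsto.mono_left nhdsWithin_le_nhds
  apply hlim.congr'
  have hmem : Set.Ioo (0:ℝ) (min (1/2) (1/(3*|y| + 2*|x| + 1))) ∈ nhdsWithin (0:ℝ) (Set.Ioi 0) := by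
    apply Ioo_mem_nhdsGT_of_mem
    refine ⟨le_refl 0, lt_min (by norm_num) (by positivity)⟩
  filter_upwards [hmem] with h hh
  obtain ⟨hh0, hhlt⟩ := hh
  have hh' : h ≠ 0 := ne_of_gt hh0
  have hhalf : h < 1/2 := lt_of_lt_of_le hhlt (min_le_left _ _)
  have hxy : h < 1/(3*|y| + 2*|x| + 1) := lt_of_lt_of_le hhlt (min_le_right _ _)
  have hden : (0:ℝ) < 3*|y| + 2*|x| + 1 := by positivity
  have hinv : (3*|y| + 2*|x| + 1) * h < 1 := by
    calc (3*|y| + 2*|x| + 1) * h < (3*|y| + 2*|x| + 1) * (1/(3*|y| + 2*|x| + 1)) :=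
          mul_lt_mul_of_pos_left hxy hden
      _ = 1 := mul_one_div_cancel (ne_of_gt hden)
  have h1h : (0:ℝ) < 1 - h^2 := by nlinarith
  have h1h' : (1:ℝ) - h^2 ≠ 0 := ne_of_gt h1h
  have hδpos : (0:ℝ) < 3*(1-h^2)*(3+h^2) := by positivity
  rw [hHtilde]
  simp only [hgdef]
  generalize hsdef : Real.sqrt (3*(1-h^2)*(3+h^2)) = s
  have hs2 : s^2 = 3*(1-h^2)*(3+h^2) := by rw [← hsdef]; exact Real.sq_sqrt hδpos.le
  have hs_ge : 2 ≤ s := by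
    have hs0 : 0 ≤ s := by rw [← hsdef]; exact Real.sqrt_nonneg _
    nlinarith
  generalize hcdef : s/(3*(1-h^2)) = c
  clear hmem hlim hg0 hcont h9 hgdef hHtilde Htilde g hsdef
  have hc3 : c*(3*(1-h^2)) = s := by rw [← hcdef]; field_simp
  have hc_pos : 0 < c := by
    rw [← hcdef]; exact div_pos (by linarith) (by nlinarith)
  have hc_ge : 2/3 ≤ c := by
    rw [← hcdef, le_div_iff₀ (by nlinarith)]
    nlinarith
  -- sign facts for the three denominator factors
  have habsy : y ≤ |y| := le_abs_self y
  have habsy' : -|y| ≤ y := neg_abs_le y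
  have habsx : x ≤ |x| := le_abs_self x
  have habsx' : -|x| ≤ x := neg_abs_le x
  have hxh : |x| * h < 1/2 := by nlinarith [abs_nonneg y, abs_nonneg x]
  have hB : 0 < y + s/(6*h) := by
    have h1 : |y| < s/(6*h) := by
      rw [lt_div_iff₀ (by positivity)]
      nlinarith [abs_nonneg x, abs_nonneg y]
    linarith
  have hkey2 : |y| + c*|x| < c/h := by
    rw [lt_div_iff₀ hh0]
    have h2 : (2/3)*(1-|x| * h) ≤ c*(1-|x| * h) := mul_le_mul_of_nonneg_right hc_ge (by linarith)
    nlinarith [abs_nonneg x, abs_nonneg y]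
  have hA : y + c*x - c/h < 0 := by
    have h3 : c*x ≤ c*|x| := mul_le_mul_of_nonneg_left habsx hc_pos.le
    linarith
  have hC : y - c*x - c/h < 0 := by
    have h3 : -(c*x) ≤ c*|x| := by
      rw [← mul_neg]; exact mul_le_mul_of_nonneg_left (neg_le_abs x) hc_pos.le
    linarith
  have hA' : y + c*x - c/h ≠ 0 := ne_of_lt hA
  have hB' : y + s/(6*h) ≠ 0 := ne_of_gt hB
  have hC' : y - c*x - c/h ≠ 0 := ne_of_lt hC
  have hrel : (c/h)^2 - 2*(s/(6*h))*(c/h) = c^2 := by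
    rw [← hc3]
    field_simp
    ring
  have hkey := key17 x y (s/(6*h)) (c/h) c hA' hB' hC' hrel
  rw [hkey, div_div]
  congr 1
  field_simp
end

section
/- For the Kahan discretisation of a Hamiltonian system ẋ = J∇H(x) with cubic Hamiltonian H : ℝᴺ → ℝ (degree-3 polynomial) and constant skew-symmetric matrix J, the function H̃(x,h) = H(x) + (h/3)·∇H(x)ᵀ(I − (h/2)f'(x))⁻¹f(x), where f(x) = J∇H(x), is invariant under the Kahan map Φ(x,h) = x + h(I − (h/2)f'(x))⁻¹f(x) in the case N = 2: H̃(Φ(x,h),h) = H̃(x,h) wherever all expressions are defined. -/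
/-!
Write `Δ = Φ x - x`, `g = ∇H(x)` and `S = ∇²H(x)`. The Kahan step `(1 - (h/2) J S) Δ = h J g`
reads `Δ = h J ḡ` with `ḡ = g + S Δ / 2`. Since `H` is cubic, the univariate polynomial
`t ↦ H(x + t Δ)` has degree at most three, and exact Taylor expansion along it gives
* `∇H(x + Δ) - ∇²H(x + Δ) Δ / 2 = ḡ`, so `Δ` also solves the backward system
  `(1 + (h/2) J ∇²H(x + Δ)) Δ = h J ∇H(x + Δ)`;
* `H(x + Δ) - H(x) - (∇H(x) + ∇H(x + Δ)) ⬝ Δ / 3 = ḡ ⬝ Δ / 3 = (h/3) ḡ ⬝ J ḡ = 0`.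
In dimension two, `A = (h/2) J ∇²H(x + Δ)` has trace zero, so `(1 - A)(1 + A) = det (1 - A)` by
Cayley–Hamilton. Hence the next step `v`, solving `(1 - A) v = h J ∇H(x + Δ)`, satisfies
`∇H(x + Δ) ⬝ (v + Δ) = 0`: the correction term of `H̃` at `Φ x` is `-∇H(Φ x) ⬝ Δ / 3`, and the
second identity above becomes `H̃(Φ x) = H̃(x)`.
-/

open Matrix MvPolynomial

namespace Polynomial

variable {K : Type*} [Field K] [CharZero K]

theorem eval_one_sub_eval_zero_of_natDegree_le_three {p : K[X]} (hp : p.natDegree ≤ 3) :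
    p.eval 1 - p.eval 0
      = (2 * (derivative p).eval 0 + (derivative p).eval 1) / 3
        + (derivative (derivative p)).eval 0 / 6 := by
  rw [p.as_sum_range' 4 (by omega)]
  simp only [Finset.sum_range_succ, Finset.sum_range_zero, zero_add, derivative_add,
    derivative_monomial, eval_add, eval_monomial]
  ring

theorem eval_one_sub_eq_eval_zero_add_of_natDegree_le_two {q : K[X]} (hq : q.natDegree ≤ 2) :
    q.eval 1 - (derivative q).eval 1 / 2 = q.eval 0 + (derivative q).eval 0 / 2 := by
  rw [q.as_sum_range' 3 (by omega)]
  simp only [Finset.sum_range_succ, Finset.sum_range_zero, zero_add, derivative_add,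
    derivative_monomial, eval_add, eval_monomial]
  ring

end Polynomial

namespace Matrix

section SkewSymmetric

variable {n R : Type*} [Fintype n] [CommRing R] [NoZeroDivisors R] [CharZero R]

theorem trace_mul_eq_zero_of_transpose_eq_neg {J S : Matrix n n R} (hJ : Jᵀ = -J)
    (hS : S.IsSymm) : (J * S).trace = 0 := by
  refine CharZero.eq_neg_self_iff.mp ?_
  calc (J * S).trace = (J * S)ᵀ.trace := (trace_transpose _).symm
    _ = -(J * S).trace := by rw [transpose_mul, hS.eq, hJ, mul_neg, trace_neg, trace_mul_comm]

theorem dotProduct_mulVec_self_eq_zero_of_transpose_eq_neg {J : Matrix n n R} (hJ : Jᵀ = -J)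
    (v : n → R) : v ⬝ᵥ (J *ᵥ v) = 0 := by
  refine CharZero.eq_neg_self_iff.mp ?_
  calc v ⬝ᵥ (J *ᵥ v) = (Jᵀ *ᵥ v) ⬝ᵥ v := by rw [dotProduct_mulVec, mulVec_transpose]
    _ = -(v ⬝ᵥ (J *ᵥ v)) := by rw [hJ, neg_mulVec, neg_dotProduct, dotProduct_comm]

end SkewSymmetric

section FinTwo

variable {R : Type*} [CommRing R]

theorem one_sub_mul_one_add_of_trace_eq_zero {A : Matrix (Fin 2) (Fin 2) R}
    (hA : A.trace = 0) : (1 - A) * (1 + A) = (1 - A).det • (1 : Matrix (Fin 2) (Fin 2) R) := by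
  have hA11 : A 1 1 = -A 0 0 := by rw [trace_fin_two] at hA; linear_combination hA
  ext i j
  fin_cases i <;> fin_cases j <;> simp [det_fin_two, mul_apply, Fin.sum_univ_two, hA11] <;> ring

theorem det_one_sub_smul_add_of_trace_eq_zero {A : Matrix (Fin 2) (Fin 2) R} (hA : A.trace = 0)
    {u v b : Fin 2 → R} (hv : (1 - A) *ᵥ v = b) (hu : (1 + A) *ᵥ u = b) :
    (1 - A).det • (v + u) = (2 : R) • b := by
  have hcomm : (1 + A) * (1 - A) = (1 - A) * (1 + A) := by noncomm_ring
  calc (1 - A).det • (v + u) = (1 + A) *ᵥ ((1 - A) *ᵥ v) + (1 - A) *ᵥ ((1 + A) *ᵥ u) := by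
        simp only [mulVec_mulVec, hcomm, one_sub_mul_one_add_of_trace_eq_zero hA, smul_mulVec,
          one_mulVec, smul_add]
    _ = (2 : R) • b := by
        rw [hv, hu, ← add_mulVec, add_add_sub_cancel, add_mulVec, one_mulVec, two_smul]

end FinTwo

end Matrix

namespace MvPolynomial

section CommRing

variable {R σ : Type*} [CommRing R]

theorem pderiv_pderiv_comm (i j : σ) (P : MvPolynomial σ R) :
    pderiv i (pderiv j P) = pderiv j (pderiv i P) := by
  classical
  induction P using MvPolynomial.induction_on with
  | C a => simp
  | add p q hp hq => simp [hp, hq]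
  | mul_X p k hp =>
    simp only [pderiv_mul, map_add, pderiv_X, Pi.single_apply, hp]
    split_ifs <;> simp [add_comm, add_left_comm]

theorem totalDegree_pderiv_le (i : σ) (P : MvPolynomial σ R) :
    (pderiv i P).totalDegree ≤ P.totalDegree - 1 := by
  refine Finset.sup_le fun m hm => ?_
  have hcoeff : m + Finsupp.single i 1 ∈ P.support := by
    rw [mem_support_iff, coeff_pderiv] at hm
    exact mem_support_iff.mpr (left_ne_zero_of_mul hm)
  have := le_totalDegree hcoeff
  rw [Finsupp.sum_add_index' (fun _ => rfl) (fun _ _ _ => rfl),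
    Finsupp.sum_single_index rfl] at this
  omega

noncomputable def gradientAt (P : MvPolynomial σ R) (x : σ → R) : σ → R :=
  fun i => eval x (pderiv i P)

noncomputable def hessianAt (P : MvPolynomial σ R) (x : σ → R) : Matrix σ σ R :=
  Matrix.of fun i j => eval x (pderiv j (pderiv i P))

theorem isSymm_hessianAt (P : MvPolynomial σ R) (x : σ → R) : (hessianAt P x).IsSymm := by
  ext i j
  simp [hessianAt, pderiv_pderiv_comm i j]

theorem hessianAt_mulVec_apply [Fintype σ] (P : MvPolynomial σ R) (x v : σ → R) (i : σ) :
    (hessianAt P x *ᵥ v) i = gradientAt (pderiv i P) x ⬝ᵥ v :=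
  rfl

noncomputable def restrictToLine (x v : σ → R) (P : MvPolynomial σ R) : Polynomial R :=
  aeval (fun i => Polynomial.C (v i) * Polynomial.X + Polynomial.C (x i)) P

variable (x v : σ → R)

theorem eval_restrictToLine (P : MvPolynomial σ R) (t : R) :
    (restrictToLine x v P).eval t = eval (x + t • v) P := by
  induction P using MvPolynomial.induction_on with
  | C a => simp [restrictToLine]
  | add p q hp hq =>
    simp only [restrictToLine, map_add, Polynomial.eval_add] at hp hq ⊢
    rw [hp, hq]
  | mul_X p k hp =>
    rw [restrictToLine, map_mul, aeval_X, Polynomial.eval_mul, ← restrictToLine, hp]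
    simp only [eval_X, Pi.add_apply, Pi.smul_apply, smul_eq_mul, Polynomial.eval_add,
      Polynomial.eval_mul, Polynomial.eval_C, Polynomial.eval_X, map_mul]
    ring

variable [Fintype σ]

theorem natDegree_restrictToLine_le (P : MvPolynomial σ R) :
    (restrictToLine x v P).natDegree ≤ P.totalDegree := by
  rw [restrictToLine, aeval_def, eval₂_eq', Polynomial.algebraMap_eq]
  refine Polynomial.natDegree_sum_le_of_forall_le _ _ fun d hd => ?_
  refine (Polynomial.natDegree_C_mul_le _ _).trans ?_
  refine (Polynomial.natDegree_prod_le _ _).trans ?_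
  have hdeg : ∑ i, d i ≤ P.totalDegree := by
    have := le_totalDegree hd
    rwa [Finsupp.sum_fintype _ _ fun _ => rfl] at this
  refine le_trans (Finset.sum_le_sum fun i _ => ?_) hdeg
  calc ((Polynomial.C (v i) * Polynomial.X + Polynomial.C (x i)) ^ d i).natDegree
      ≤ d i * (Polynomial.C (v i) * Polynomial.X + Polynomial.C (x i)).natDegree :=
        Polynomial.natDegree_pow_le
    _ ≤ d i * 1 := Nat.mul_le_mul_left _ Polynomial.natDegree_linear_le
    _ = d i := mul_one _

theorem derivative_restrictToLine (P : MvPolynomial σ R) :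
    Polynomial.derivative (restrictToLine x v P)
      = ∑ i, Polynomial.C (v i) * restrictToLine x v (pderiv i P) := by
  classical
  induction P using MvPolynomial.induction_on with
  | C a => simp [restrictToLine]
  | add p q hp hq =>
    simp only [restrictToLine, map_add, mul_add, Finset.sum_add_distrib] at hp hq ⊢
    rw [hp, hq]
  | mul_X p k hp =>
    simp only [restrictToLine, map_mul, aeval_X, Polynomial.derivative_mul, pderiv_mul, map_add,
      pderiv_X, Pi.single_apply, mul_add, Finset.sum_add_distrib] at hp ⊢
    rw [hp]
    simp only [Finset.sum_mul, mul_assoc, Polynomial.derivative_C, Polynomial.derivative_X,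
      zero_mul, mul_zero, mul_one, zero_add, add_zero, MonoidWithZeroHom.map_ite_one_zero, mul_ite,
      Finset.sum_ite_eq, Finset.mem_univ, if_true]
    ring

theorem eval_derivative_restrictToLine (P : MvPolynomial σ R) (t : R) :
    (Polynomial.derivative (restrictToLine x v P)).eval t = gradientAt P (x + t • v) ⬝ᵥ v := by
  simp [derivative_restrictToLine, Polynomial.eval_finsetSum, eval_restrictToLine,
    gradientAt, dotProduct, mul_comm]

theorem eval_derivative_derivative_restrictToLine (P : MvPolynomial σ R) (t : R) :
    (Polynomial.derivative (Polynomial.derivative (restrictToLine x v P))).eval t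
      = v ⬝ᵥ (hessianAt P (x + t • v) *ᵥ v) := by
  simp only [derivative_restrictToLine x v P, Polynomial.derivative_sum,
    Polynomial.derivative_C_mul, Polynomial.eval_finsetSum, Polynomial.eval_mul,
    Polynomial.eval_C, eval_derivative_restrictToLine]
  rfl

end CommRing

section Cubic

variable {K σ : Type*} [Field K] [CharZero K] [Fintype σ] {P : MvPolynomial σ K}

theorem eval_add_sub_eval_of_totalDegree_le_three (hP : P.totalDegree ≤ 3) (x v : σ → K) :
    eval (x + v) P - eval x P
      = (2 * (gradientAt P x ⬝ᵥ v) + gradientAt P (x + v) ⬝ᵥ v) / 3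
        + v ⬝ᵥ (hessianAt P x *ᵥ v) / 6 := by
  have := Polynomial.eval_one_sub_eval_zero_of_natDegree_le_three
    ((natDegree_restrictToLine_le x v P).trans hP)
  simpa [eval_restrictToLine, eval_derivative_restrictToLine,
    eval_derivative_derivative_restrictToLine] using this

theorem gradientAt_add_sub_of_totalDegree_le_three (hP : P.totalDegree ≤ 3) (x v : σ → K) :
    gradientAt P (x + v) - (2 : K)⁻¹ • (hessianAt P (x + v) *ᵥ v)
      = gradientAt P x + (2 : K)⁻¹ • (hessianAt P x *ᵥ v) := by
  ext i
  have := Polynomial.eval_one_sub_eq_eval_zero_add_of_natDegree_le_two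
    ((natDegree_restrictToLine_le x v (pderiv i P)).trans
      ((totalDegree_pderiv_le i P).trans (Nat.sub_le_sub_right hP 1)))
  simp only [eval_restrictToLine, eval_derivative_restrictToLine, one_smul, zero_smul,
    add_zero] at this
  simpa [hessianAt_mulVec_apply, gradientAt, div_eq_inv_mul] using this

end Cubic

end MvPolynomial

section Kahan

variable {K σ : Type*} [Field K] [CharZero K] [Fintype σ] {J : Matrix σ σ K}
  {H : MvPolynomial σ K} {h : K} {x Δ : σ → K}

theorem eq_smul_mulVec_of_kahan_step [DecidableEq σ]
    (hstep : (1 - (h / 2) • (J * hessianAt H x)) *ᵥ Δ = h • J *ᵥ gradientAt H x) :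
    Δ = h • J *ᵥ (gradientAt H x + (2 : K)⁻¹ • (hessianAt H x *ᵥ Δ)) := by
  simp only [sub_mulVec, one_mulVec, smul_mulVec, ← mulVec_mulVec, mulVec_add,
    mulVec_smul] at hstep ⊢
  linear_combination (norm := module) hstep

theorem one_add_mulVec_of_kahan_step [DecidableEq σ] (hH : H.totalDegree ≤ 3)
    (hΔ : Δ = h • J *ᵥ (gradientAt H x + (2 : K)⁻¹ • (hessianAt H x *ᵥ Δ))) :
    (1 + (h / 2) • (J * hessianAt H (x + Δ))) *ᵥ Δ = h • J *ᵥ gradientAt H (x + Δ) := by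
  rw [← gradientAt_add_sub_of_totalDegree_le_three hH] at hΔ
  simp only [add_mulVec, one_mulVec, smul_mulVec, ← mulVec_mulVec, mulVec_sub,
    mulVec_smul] at hΔ ⊢
  linear_combination (norm := module) hΔ

theorem eval_add_sub_eval_of_kahan_step (hH : H.totalDegree ≤ 3) (hJ : Jᵀ = -J)
    (hΔ : Δ = h • J *ᵥ (gradientAt H x + (2 : K)⁻¹ • (hessianAt H x *ᵥ Δ))) :
    eval (x + Δ) H - eval x H = (gradientAt H x ⬝ᵥ Δ + gradientAt H (x + Δ) ⬝ᵥ Δ) / 3 := by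
  set g := gradientAt H x + (2 : K)⁻¹ • (hessianAt H x *ᵥ Δ) with hg
  have hmid : g ⬝ᵥ Δ = 0 := by
    rw [hΔ, dotProduct_smul, dotProduct_mulVec_self_eq_zero_of_transpose_eq_neg hJ, smul_zero]
  rw [hg, add_dotProduct, smul_dotProduct, dotProduct_comm (hessianAt H x *ᵥ Δ)] at hmid
  linear_combination eval_add_sub_eval_of_totalDegree_le_three hH x Δ + hmid / 3

end Kahan

theorem dotProduct_add_eq_zero_of_kahan_steps {K : Type*} [Field K] [CharZero K] {h : K}
    {J S : Matrix (Fin 2) (Fin 2) K} {g u v : Fin 2 → K} (hJ : Jᵀ = -J) (hS : S.IsSymm)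
    (hdet : (1 - (h / 2) • (J * S)).det ≠ 0)
    (hv : (1 - (h / 2) • (J * S)) *ᵥ v = h • J *ᵥ g)
    (hu : (1 + (h / 2) • (J * S)) *ᵥ u = h • J *ᵥ g) :
    g ⬝ᵥ (v + u) = 0 := by
  have htrace : ((h / 2) • (J * S)).trace = 0 := by
    rw [trace_smul, trace_mul_eq_zero_of_transpose_eq_neg hJ hS, smul_zero]
  have := congrArg (g ⬝ᵥ ·) (det_one_sub_smul_add_of_trace_eq_zero htrace hv hu)
  simp only [dotProduct_smul, dotProduct_mulVec_self_eq_zero_of_transpose_eq_neg hJ, smul_eq_mul,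
    mul_zero] at this
  exact (mul_eq_zero.mp this).resolve_left hdet

/-- For `N = 2`, the modified Hamiltonian
`H̃(x,h) = H(x) + (h/3)∇H(x)ᵀ(I − (h/2)f'(x))⁻¹f(x)`, with `f = J∇H` and
`H` a cubic polynomial, is invariant under the Kahan map
`Φ(x,h) = x + h(I − (h/2)f'(x))⁻¹f(x)`. -/
theorem stmt18 (h : ℝ)
    (J : Matrix (Fin 2) (Fin 2) ℝ) (hJ : Jᵀ = -J)
    (H : MvPolynomial (Fin 2) ℝ) (hdeg : H.totalDegree ≤ 3)
    (grad : (Fin 2 → ℝ) → (Fin 2 → ℝ))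
    (hgrad : ∀ x i, grad x i = eval x (pderiv i H))
    (f : (Fin 2 → ℝ) → (Fin 2 → ℝ)) (hf : ∀ x, f x = J *ᵥ grad x)
    (Jac : (Fin 2 → ℝ) → Matrix (Fin 2) (Fin 2) ℝ)
    (hJac : ∀ x i j, Jac x i j = ∑ k, J i k * eval x (pderiv j (pderiv k H)))
    (M : (Fin 2 → ℝ) → Matrix (Fin 2) (Fin 2) ℝ)
    (hM : ∀ x, M x = 1 - (h/2) • Jac x)
    (Φ : (Fin 2 → ℝ) → (Fin 2 → ℝ))
    (hΦ : ∀ x, Φ x = x + h • ((M x)⁻¹ *ᵥ f x))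
    (Htilde : (Fin 2 → ℝ) → ℝ)
    (hHtilde : ∀ x, Htilde x = eval x H + (h/3) * ∑ i, grad x i * ((M x)⁻¹ *ᵥ f x) i)
    (x : Fin 2 → ℝ)
    (hinv : IsUnit (M x)) (hinv' : IsUnit (M (Φ x))) :
    Htilde (Φ x) = Htilde x := by
  obtain rfl : grad = gradientAt H := funext fun y => funext (hgrad y)
  have hM' : ∀ y, M y = 1 - (h / 2) • (J * hessianAt H y) := fun y => by
    rw [hM]; congr 2; ext i j; simp [hJac, mul_apply, hessianAt]
  have hsolve : ∀ y, IsUnit (M y) → (1 - (h / 2) • (J * hessianAt H y)) *ᵥ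
      (h • ((M y)⁻¹ *ᵥ f y)) = h • J *ᵥ gradientAt H y := fun y hy => by
    rw [← hM', mulVec_smul, mulVec_mulVec, mul_nonsing_inv _ ((isUnit_iff_isUnit_det _).mp hy),
      one_mulVec, hf]
  have hHtilde' : ∀ y, Htilde y = eval y H + gradientAt H y ⬝ᵥ (h • ((M y)⁻¹ *ᵥ f y)) / 3 :=
    fun y => by rw [hHtilde, dotProduct_smul, smul_eq_mul, dotProduct]; ring
  obtain ⟨Δ, hΔ⟩ : ∃ Δ, h • ((M x)⁻¹ *ᵥ f x) = Δ := ⟨_, rfl⟩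
  obtain ⟨v, hv⟩ : ∃ v, h • ((M (Φ x))⁻¹ *ᵥ f (Φ x)) = v := ⟨_, rfl⟩
  have hΦx : Φ x = x + Δ := hΔ ▸ hΦ x
  have hstep := hsolve x hinv
  have hnext := hsolve _ hinv'
  rw [hΔ] at hstep
  rw [hv, hΦx] at hnext
  rw [hM', hΦx] at hinv'
  have hmid := eq_smul_mulVec_of_kahan_step hstep
  have hrev := dotProduct_add_eq_zero_of_kahan_steps hJ (isSymm_hessianAt H (x + Δ))
    ((isUnit_iff_isUnit_det _).mp hinv').ne_zero hnext (one_add_mulVec_of_kahan_step hdeg hmid)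
  rw [hHtilde', hHtilde', hΔ, hv, hΦx]
  rw [dotProduct_add] at hrev
  linear_combination eval_add_sub_eval_of_kahan_step hdeg hJ hmid + hrev / 3
end
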